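/- arXiv:physics/9703002 — 3 statements merged into one kernel-verified Lean document; each statement's English description precedes it below -/
import Mathlib

section
/- Let 0 < γ < 1 and let f : (0,∞) → ℂ be differentiable, with q ↦ q^γ f(q) locally integrable on [0,∞), such that q^{γ+1} f(q) → 0 as q → 0⁺, f is bounded on (1,∞), and for every a > 0 the function q ↦ q^{γ+1} f'(q) e^{-aq} is integrable on (0,∞). Then for every ζ with Im ζ < 0, ∫₀^∞ e^{-iζq} q^γ (q f'(q)) dq = −ζ F'(ζ) − (γ+1) F(ζ), where F = L^γ f. In other words, the transform L^γ carries the operator q d/dq into the operator −ζ ∂/∂ζ − (γ+1). -/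
open MeasureTheory Filter
open Set


theorem exp_norm' (ζ : ℂ) (q : ℝ) :
    ‖Complex.exp (-(Complex.I * ζ * (q:ℂ)))‖ = Real.exp (ζ.im * q) := by
  rw [Complex.norm_exp]; congr 1; simp [Complex.mul_re]

theorem aux_int (γ : ℝ) (f : ℝ → ℂ)
    (hcont : ContinuousOn f (Set.Ioi 0))
    (hloc : IntegrableOn (fun q : ℝ => ((q ^ γ : ℝ) : ℂ) * f q) (Set.Ioc (0:ℝ) 1))
    (hbdd : ∃ C : ℝ, ∀ q : ℝ, 1 < q → ‖f q‖ ≤ C)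
    (δ b : ℝ) (hγ0 : 0 < γ) (hδ1 : γ ≤ δ) (hb : 0 < b) :
    IntegrableOn (fun q : ℝ => q ^ δ * Real.exp (-(b*q)) * ‖f q‖) (Set.Ioi (0:ℝ)) := by
  obtain ⟨C, hC⟩ := hbdd
  have hmeas : AEStronglyMeasurable (fun q : ℝ => q ^ δ * Real.exp (-(b*q)) * ‖f q‖)
      (volume.restrict (Set.Ioi (0:ℝ))) := by
    apply ContinuousOn.aestronglyMeasurable _ measurableSet_Ioi
    apply ContinuousOn.mul
    · exact ((continuousOn_id.rpow_const (fun x hx => Or.inl (ne_of_gt hx))).mul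
        ((Real.continuous_exp.comp (continuous_const.mul continuous_id).neg).continuousOn))
    · exact hcont.norm
  rw [← Set.Ioc_union_Ioi_eq_Ioi (zero_le_one (α := ℝ))]
  apply IntegrableOn.union
  · apply Integrable.mono hloc.norm (hmeas.mono_measure
      (Measure.restrict_mono (Set.Ioc_subset_Ioi_self) le_rfl))
    filter_upwards [ae_restrict_mem measurableSet_Ioc] with q hq
    have hq0 : 0 < q := hq.1
    have h1 : q ^ δ ≤ q ^ γ := Real.rpow_le_rpow_of_exponent_ge hq0 hq.2 hδ1
    have h2 : Real.exp (-(b*q)) ≤ 1 :=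
      Real.exp_le_one_iff.mpr (by nlinarith)
    rw [Real.norm_eq_abs, abs_of_nonneg (by positivity), norm_norm, norm_mul,
      Complex.norm_real, Real.norm_eq_abs, abs_of_nonneg (Real.rpow_nonneg hq0.le _)]
    calc q ^ δ * Real.exp (-(b*q)) * ‖f q‖ ≤ q ^ γ * 1 * ‖f q‖ := by
          apply mul_le_mul_of_nonneg_right _ (norm_nonneg _)
          exact mul_le_mul h1 h2 (Real.exp_pos _).le (Real.rpow_nonneg hq0.le _)
      _ = q ^ γ * ‖f q‖ := by ring
  · have hInt : IntegrableOn (fun x : ℝ => x ^ δ * Real.exp (-(b * x))) (Set.Ioi (0:ℝ)) := by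
      simpa [neg_mul] using integrableOn_rpow_mul_exp_neg_mul_rpow
        (by linarith : (-1:ℝ) < δ) (zero_lt_one : (0:ℝ) < 1) hb
    have hInt' : IntegrableOn (fun x : ℝ => max C 0 * (x ^ δ * Real.exp (-(b * x))))
        (Set.Ioi (1:ℝ)) := ((hInt.mono_set (Set.Ioi_subset_Ioi zero_le_one)).const_mul _)
    apply Integrable.mono hInt' (hmeas.mono_measure
      (Measure.restrict_mono (Set.Ioi_subset_Ioi zero_le_one) le_rfl))
    filter_upwards [ae_restrict_mem measurableSet_Ioi] with q hq
    have hq0 : (0:ℝ) < q := lt_trans zero_lt_one hq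
    rw [Real.norm_eq_abs, abs_of_nonneg (by positivity), Real.norm_eq_abs,
      abs_of_nonneg (by positivity)]
    calc q ^ δ * Real.exp (-(b*q)) * ‖f q‖ ≤ q ^ δ * Real.exp (-(b*q)) * max C 0 := by
          apply mul_le_mul_of_nonneg_left ((hC q hq).trans (le_max_left _ _)) (by positivity)
      _ = max C 0 * (q ^ δ * Real.exp (-(b*q))) := by ring

theorem measC (f : ℝ → ℂ) (hcont : ContinuousOn f (Set.Ioi 0)) (x : ℂ) (δ : ℝ) :
    AEStronglyMeasurable
      (fun q : ℝ => Complex.exp (-(Complex.I * x * (q:ℂ))) * ((q ^ δ : ℝ) : ℂ) * f q)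
      (volume.restrict (Set.Ioi (0:ℝ))) := by
  apply ContinuousOn.aestronglyMeasurable _ measurableSet_Ioi
  apply ContinuousOn.mul _ hcont
  apply ContinuousOn.mul
  · exact (Complex.continuous_exp.comp
      ((continuous_const.mul Complex.continuous_ofReal).neg)).continuousOn
  · exact Complex.continuous_ofReal.comp_continuousOn
      (continuousOn_id.rpow_const (fun y hy => Or.inl (ne_of_gt hy)))

theorem aux_intC (γ : ℝ) (hγ0 : 0 < γ) (f : ℝ → ℂ)
    (hcont : ContinuousOn f (Set.Ioi 0))
    (hloc : IntegrableOn (fun q : ℝ => ((q ^ γ : ℝ) : ℂ) * f q) (Set.Ioc (0:ℝ) 1))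
    (hbdd : ∃ C : ℝ, ∀ q : ℝ, 1 < q → ‖f q‖ ≤ C)
    (δ : ℝ) (hδ1 : γ ≤ δ) (ζ : ℂ) (hζ : ζ.im < 0) :
    IntegrableOn (fun q : ℝ => Complex.exp (-(Complex.I * ζ * (q:ℂ))) * ((q ^ δ : ℝ) : ℂ) * f q)
      (Set.Ioi (0:ℝ)) := by
  have hb : (0:ℝ) < -ζ.im := by linarith
  apply Integrable.mono' (aux_int γ f hcont hloc hbdd δ (-ζ.im) hγ0 hδ1 hb)
  · exact measC f hcont ζ δ
  · filter_upwards [ae_restrict_mem measurableSet_Ioi] with q hq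
    rw [norm_mul, norm_mul, exp_norm', Complex.norm_real, Real.norm_eq_abs,
      abs_of_nonneg (Real.rpow_nonneg (le_of_lt hq) _)]
    have h : ζ.im * q = -(-ζ.im * q) := by ring
    rw [h]
    exact le_of_eq (by ring)

theorem expderiv (q : ℝ) (x : ℂ) :
    HasDerivAt (fun x : ℂ => Complex.exp (-(Complex.I * x * (q:ℂ))))
      (Complex.exp (-(Complex.I * x * (q:ℂ))) * -(Complex.I * (q:ℂ))) x := by
  have h0 : HasDerivAt (fun x : ℂ => -(Complex.I * x * (q:ℂ))) (-(Complex.I * (q:ℂ))) x := by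
    simpa using (((hasDerivAt_id x).const_mul Complex.I).mul_const ((q:ℂ))).fun_neg
  exact h0.cexp

theorem expderivq (q : ℝ) (ζ : ℂ) :
    HasDerivAt (fun q : ℝ => Complex.exp (-(Complex.I * ζ * (q:ℂ))))
      (Complex.exp (-(Complex.I * ζ * (q:ℂ))) * -(Complex.I * ζ)) q := by
  have h0 : HasDerivAt (fun q : ℝ => -(Complex.I * ζ * (q:ℂ))) (-(Complex.I * ζ)) q := by
    simpa using ((Complex.ofRealCLM.hasDerivAt (x := q)).const_mul (Complex.I * ζ)).fun_neg
  exact h0.cexp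

theorem rpowderiv (γ : ℝ) (q : ℝ) (hq : 0 < q) :
    HasDerivAt (fun q : ℝ => ((q ^ (γ+1) : ℝ) : ℂ)) (((γ+1) * q ^ γ : ℝ) : ℂ) q := by
  have h := (Real.hasDerivAt_rpow_const (x := q) (p := γ+1) (Or.inl (ne_of_gt hq))).ofReal_comp
  have e : γ + 1 - 1 = γ := by ring
  rwa [e] at h

/-- The transform `L^γ f (ζ) = ∫₀^∞ e^{-iζq} q^γ f(q) dq`. -/
noncomputable def Ltrans (γ : ℝ) (f : ℝ → ℂ) (ζ : ℂ) : ℂ :=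
  ∫ q in Set.Ioi (0:ℝ), Complex.exp (-(Complex.I * ζ * (q:ℂ))) * ((q ^ γ : ℝ) : ℂ) * f q

/-- for `0 < γ < 1` and a differentiable `f` with `q^γ f(q)` locally integrable,
`q^{γ+1} f(q) → 0` as `q → 0⁺`, `f` bounded on `(1,∞)`, and `q^{γ+1} f'(q) e^{-aq}` integrable
for every `a > 0`, the transform `L^γ` carries `q d/dq` into `-ζ ∂/∂ζ - (γ+1)`:
`∫₀^∞ e^{-iζq} q^γ (q f'(q)) dq = -ζ F'(ζ) - (γ+1) F(ζ)` for `Im ζ < 0`. -/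
theorem transform_of_q_ddq
    (γ : ℝ) (hγ0 : 0 < γ) (hγ1 : γ < 1) (f f' : ℝ → ℂ)
    (hderiv : ∀ q : ℝ, 0 < q → HasDerivAt f (f' q) q)
    (hloc : ∀ R : ℝ, 0 < R →
      IntegrableOn (fun q : ℝ => ((q ^ γ : ℝ) : ℂ) * f q) (Set.Ioc (0:ℝ) R))
    (hzero : Tendsto (fun q : ℝ => ((q ^ (γ + 1) : ℝ) : ℂ) * f q)
      (nhdsWithin 0 (Set.Ioi 0)) (nhds 0))
    (hbdd : ∃ C : ℝ, ∀ q : ℝ, 1 < q → ‖f q‖ ≤ C)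
    (hint : ∀ a : ℝ, 0 < a →
      IntegrableOn (fun q : ℝ => ((q ^ (γ + 1) * Real.exp (-(a * q)) : ℝ) : ℂ) * f' q)
        (Set.Ioi (0:ℝ))) :
    ∀ ζ : ℂ, ζ.im < 0 →
      (∫ q in Set.Ioi (0:ℝ),
          Complex.exp (-(Complex.I * ζ * (q:ℂ))) * ((q ^ γ : ℝ) : ℂ) * ((q:ℂ) * f' q))
        = -ζ * deriv (Ltrans γ f) ζ - ((γ:ℂ) + 1) * Ltrans γ f ζ := by
  intro ζ hζ
  have hcont : ContinuousOn f (Set.Ioi 0) :=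
    fun q hq => ((hderiv q hq).continuousAt).continuousWithinAt
  have hloc1 := hloc 1 zero_lt_one
  set a : ℝ := -ζ.im with ha_def
  have ha : 0 < a := by simp only [ha_def]; linarith
  -- notation for the three basic integrals
  set J1 : ℂ := ∫ q in Set.Ioi (0:ℝ),
      Complex.exp (-(Complex.I * ζ * (q:ℂ))) * ((q ^ γ : ℝ) : ℂ) * f q with hJ1_def
  set J2 : ℂ := ∫ q in Set.Ioi (0:ℝ),
      Complex.exp (-(Complex.I * ζ * (q:ℂ))) * ((q ^ (γ+1) : ℝ) : ℂ) * f q with hJ2_def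
  set J3 : ℂ := ∫ q in Set.Ioi (0:ℝ),
      Complex.exp (-(Complex.I * ζ * (q:ℂ))) * ((q ^ (γ+1) : ℝ) : ℂ) * f' q with hJ3_def
  -- basic integrability
  have i1 := aux_intC γ hγ0 f hcont hloc1 hbdd γ le_rfl ζ hζ
  have i2 := aux_intC γ hγ0 f hcont hloc1 hbdd (γ+1) (by linarith) ζ hζ
  -- integrability of the f' term
  have i3 : IntegrableOn
      (fun q : ℝ => Complex.exp (-(Complex.I * ζ * (q:ℂ))) * ((q ^ (γ+1) : ℝ) : ℂ) * f' q)
      (Set.Ioi (0:ℝ)) := by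
    have h := hint a ha
    have heq : ∀ q : ℝ,
        (Complex.exp (-(Complex.I * ζ * (q:ℂ))) * ((Real.exp (a*q) : ℝ) : ℂ)) *
          (((q ^ (γ + 1) * Real.exp (-(a * q)) : ℝ) : ℂ) * f' q)
        = Complex.exp (-(Complex.I * ζ * (q:ℂ))) * ((q ^ (γ+1) : ℝ) : ℂ) * f' q := by
      intro q
      have hexp : (Real.exp (a*q) : ℂ) * (Real.exp (-(a*q)) : ℂ) = 1 := by
        rw [← Complex.ofReal_mul, ← Real.exp_add]; norm_num
      push_cast at hexp ⊢
      linear_combination (Complex.exp (-(Complex.I * ζ * (q:ℂ))) * (((q ^ (γ+1) : ℝ)) : ℂ) *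
        f' q) * hexp
    have hb : Integrable
        (fun q : ℝ => (Complex.exp (-(Complex.I * ζ * (q:ℂ))) * ((Real.exp (a*q) : ℝ) : ℂ)) *
          (((q ^ (γ + 1) * Real.exp (-(a * q)) : ℝ) : ℂ) * f' q))
        (volume.restrict (Set.Ioi (0:ℝ))) := by
      apply h.bdd_mul (c := 1)
      · exact ((Complex.continuous_exp.comp
          ((continuous_const.mul Complex.continuous_ofReal).neg)).mul
          (Complex.continuous_ofReal.comp (Real.continuous_exp.comp
            (continuous_const.mul continuous_id)))).aestronglyMeasurable
      · refine Filter.Eventually.of_forall (fun q => ?_)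
        rw [norm_mul, exp_norm', Complex.norm_real, Real.norm_eq_abs,
          abs_of_pos (Real.exp_pos _), ← Real.exp_add]
        apply le_of_eq
        rw [← Real.exp_zero]
        congr 1
        simp only [ha_def]; ring
    exact hb.congr (Filter.Eventually.of_forall heq)
  -- the parametric derivative of Ltrans
  have hD : HasDerivAt (Ltrans γ f)
      (∫ q in Set.Ioi (0:ℝ),
        Complex.exp (-(Complex.I * ζ * (q:ℂ))) * -(Complex.I * (q:ℂ)) * ((q ^ γ : ℝ) : ℂ) * f q)
      ζ := by
    have key := hasDerivAt_integral_of_dominated_loc_of_deriv_le (μ := volume.restrict (Set.Ioi (0:ℝ)))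
      (F := fun (x : ℂ) (q : ℝ) =>
        Complex.exp (-(Complex.I * x * (q:ℂ))) * ((q ^ γ : ℝ) : ℂ) * f q)
      (F' := fun (x : ℂ) (q : ℝ) =>
        Complex.exp (-(Complex.I * x * (q:ℂ))) * -(Complex.I * (q:ℂ)) * ((q ^ γ : ℝ) : ℂ) * f q)
      (x₀ := ζ) (s := Metric.ball ζ (a/2))
      (bound := fun q : ℝ => q ^ (γ+1) * Real.exp (-((a/2)*q)) * ‖f q‖)
      (Metric.ball_mem_nhds ζ (half_pos ha))
      (Filter.Eventually.of_forall (fun x => measC f hcont x γ))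
      i1
      ?_ ?_ ?_ ?_
    · exact key.2
    · -- measurability of F' ζ
      apply ContinuousOn.aestronglyMeasurable _ measurableSet_Ioi
      apply ContinuousOn.mul _ hcont
      apply ContinuousOn.mul
      · apply ContinuousOn.mul
        · exact (Complex.continuous_exp.comp
            ((continuous_const.mul Complex.continuous_ofReal).neg)).continuousOn
        · exact ((continuous_const.mul Complex.continuous_ofReal).neg).continuousOn
      · exact Complex.continuous_ofReal.comp_continuousOn
          (continuousOn_id.rpow_const (fun y hy => Or.inl (ne_of_gt hy)))
    · -- bound
      filter_upwards [ae_restrict_mem measurableSet_Ioi] with q hq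
      intro x hx
      have hq0 : (0:ℝ) < q := hq
      have him : x.im ≤ -(a/2) := by
        have h1 : |(x - ζ).im| ≤ ‖x - ζ‖ := Complex.abs_im_le_norm _
        have h2 : ‖x - ζ‖ < a/2 := by
          simpa [Complex.dist_eq] using Metric.mem_ball.mp hx
        have h3 : x.im - ζ.im ≤ a/2 := by
          have := (abs_le.mp (le_of_lt (lt_of_le_of_lt h1 h2))).2
          simpa using this
        have : ζ.im = -a := by simp [ha_def]
        linarith
      rw [norm_mul, norm_mul, norm_mul, exp_norm']
      have e1 : ‖-(Complex.I * (q:ℂ))‖ = |q| := by simp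
      have e2 : ‖((q ^ γ : ℝ) : ℂ)‖ = q ^ γ := by
        rw [Complex.norm_real, Real.norm_eq_abs, abs_of_nonneg (Real.rpow_nonneg hq0.le _)]
      rw [e1, e2, abs_of_pos hq0]
      calc Real.exp (x.im * q) * q * (q ^ γ) * ‖f q‖
          = (q ^ γ * q) * Real.exp (x.im * q) * ‖f q‖ := by ring
        _ ≤ (q ^ γ * q) * Real.exp (-((a/2)*q)) * ‖f q‖ := by
            have : Real.exp (x.im * q) ≤ Real.exp (-((a/2)*q)) :=
              Real.exp_le_exp.mpr (by nlinarith)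
            have hnn : (0:ℝ) ≤ q ^ γ * q := by positivity
            exact mul_le_mul_of_nonneg_right (mul_le_mul_of_nonneg_left this hnn) (norm_nonneg _)
        _ = q ^ (γ+1) * Real.exp (-((a/2)*q)) * ‖f q‖ := by
            rw [← Real.rpow_add_one (ne_of_gt hq0)]
    · exact aux_int γ f hcont hloc1 hbdd (γ+1) (a/2) hγ0 (by linarith) (half_pos ha)
    · -- differentiability in the parameter
      apply Filter.Eventually.of_forall
      intro q x _
      exact ((expderiv q x).mul_const _).mul_const _
  -- integration by parts
  have hibp : -(Complex.I*ζ) * J2 + (((γ:ℂ)+1) * J1 + J3) = 0 := by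
    have hG' : ∀ q ∈ Set.Ioi (0:ℝ), HasDerivAt
        (fun q : ℝ => Complex.exp (-(Complex.I * ζ * (q:ℂ))) * ((q ^ (γ+1) : ℝ) : ℂ) * f q)
        (-(Complex.I*ζ) *
            (Complex.exp (-(Complex.I * ζ * (q:ℂ))) * ((q ^ (γ+1) : ℝ) : ℂ) * f q) +
          (((γ:ℂ)+1) *
            (Complex.exp (-(Complex.I * ζ * (q:ℂ))) * ((q ^ γ : ℝ) : ℂ) * f q) +
          Complex.exp (-(Complex.I * ζ * (q:ℂ))) * ((q ^ (γ+1) : ℝ) : ℂ) * f' q)) q := by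
      intro q hq
      have h := ((expderivq q ζ).fun_mul (rpowderiv γ q hq)).fun_mul (hderiv q hq)
      refine h.congr_deriv ?_
      push_cast
      ring
    have hGint : IntegrableOn (fun q : ℝ =>
        -(Complex.I*ζ) *
            (Complex.exp (-(Complex.I * ζ * (q:ℂ))) * ((q ^ (γ+1) : ℝ) : ℂ) * f q) +
          (((γ:ℂ)+1) *
            (Complex.exp (-(Complex.I * ζ * (q:ℂ))) * ((q ^ γ : ℝ) : ℂ) * f q) +
          Complex.exp (-(Complex.I * ζ * (q:ℂ))) * ((q ^ (γ+1) : ℝ) : ℂ) * f' q))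
        (Set.Ioi (0:ℝ)) :=
      (i2.const_mul _).add ((i1.const_mul _).add i3)
    have hval : (fun q : ℝ =>
        Complex.exp (-(Complex.I * ζ * (q:ℂ))) * ((q ^ (γ+1) : ℝ) : ℂ) * f q) 0 = 0 := by
      show Complex.exp (-(Complex.I * ζ * ((0:ℝ):ℂ))) * (((0:ℝ) ^ (γ+1) : ℝ) : ℂ) * f 0 = 0
      rw [Real.zero_rpow (by linarith : γ + 1 ≠ 0)]
      simp
    have hG0 : ContinuousWithinAt
        (fun q : ℝ => Complex.exp (-(Complex.I * ζ * (q:ℂ))) * ((q ^ (γ+1) : ℝ) : ℂ) * f q)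
        (Set.Ici 0) 0 := by
      unfold ContinuousWithinAt
      rw [← Set.Ioi_insert, nhdsWithin_insert, tendsto_sup]
      constructor
      · exact tendsto_pure_nhds _ 0
      · rw [hval]
        have hE : Tendsto (fun q : ℝ => Complex.exp (-(Complex.I * ζ * (q:ℂ))))
            (nhdsWithin 0 (Set.Ioi 0)) (nhds (Complex.exp (-(Complex.I * ζ * ((0:ℝ):ℂ))))) :=
          ((Complex.continuous_exp.comp
            ((continuous_const.mul Complex.continuous_ofReal).neg)).tendsto 0).mono_left
            nhdsWithin_le_nhds
        have := hE.mul hzero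
        simp only [mul_zero] at this
        apply this.congr
        intro q
        ring
    have hGtop : Tendsto
        (fun q : ℝ => Complex.exp (-(Complex.I * ζ * (q:ℂ))) * ((q ^ (γ+1) : ℝ) : ℂ) * f q)
        atTop (nhds 0) := by
      obtain ⟨C, hC⟩ := hbdd
      rw [tendsto_zero_iff_norm_tendsto_zero]
      apply squeeze_zero' (Filter.Eventually.of_forall (fun q => norm_nonneg _))
        (g := fun q : ℝ => max C 0 * (q ^ (γ+1) * Real.exp (-(a * q))))
      · filter_upwards [eventually_gt_atTop (1:ℝ)] with q hq
        have hq0 : (0:ℝ) < q := lt_trans zero_lt_one hq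
        rw [norm_mul, norm_mul, exp_norm', Complex.norm_real, Real.norm_eq_abs,
          abs_of_nonneg (Real.rpow_nonneg hq0.le _)]
        have h1 : Real.exp (ζ.im * q) = Real.exp (-(a*q)) := by
          congr 1; simp only [ha_def]; ring
        rw [h1]
        calc Real.exp (-(a*q)) * q ^ (γ+1) * ‖f q‖
            ≤ Real.exp (-(a*q)) * q ^ (γ+1) * max C 0 := by
              apply mul_le_mul_of_nonneg_left ((hC q hq).trans (le_max_left _ _)) (by positivity)
          _ = max C 0 * (q ^ (γ+1) * Real.exp (-(a * q))) := by ring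
      · have := (tendsto_rpow_mul_exp_neg_mul_atTop_nhds_zero (γ+1) a ha).const_mul (max C 0)
        simpa [neg_mul] using this
    have key := integral_Ioi_of_hasDerivAt_of_tendsto hG0 hG' hGint hGtop
    rw [show Complex.exp (-(Complex.I * ζ * ((0:ℝ):ℂ))) * (((0:ℝ) ^ (γ+1) : ℝ) : ℂ) * f 0 = 0
      from hval, sub_zero] at key
    have iA : IntegrableOn (fun q : ℝ => -(Complex.I*ζ) *
        (Complex.exp (-(Complex.I * ζ * (q:ℂ))) * ((q ^ (γ+1) : ℝ) : ℂ) * f q))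
        (Set.Ioi (0:ℝ)) := i2.const_mul _
    have iB : IntegrableOn (fun q : ℝ => ((γ:ℂ)+1) *
        (Complex.exp (-(Complex.I * ζ * (q:ℂ))) * ((q ^ γ : ℝ) : ℂ) * f q))
        (Set.Ioi (0:ℝ)) := i1.const_mul _
    have iBC : IntegrableOn (fun q : ℝ => ((γ:ℂ)+1) *
        (Complex.exp (-(Complex.I * ζ * (q:ℂ))) * ((q ^ γ : ℝ) : ℂ) * f q) +
        Complex.exp (-(Complex.I * ζ * (q:ℂ))) * ((q ^ (γ+1) : ℝ) : ℂ) * f' q)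
        (Set.Ioi (0:ℝ)) := by exact iB.add i3
    rw [integral_add iA iBC, integral_add iB i3, integral_const_mul, integral_const_mul] at key
    rw [← hJ1_def, ← hJ2_def, ← hJ3_def] at key
    exact key
  -- identify deriv with -I * J2
  have hDval : deriv (Ltrans γ f) ζ = -Complex.I * J2 := by
    rw [hD.deriv, hJ2_def, ← integral_const_mul]
    apply setIntegral_congr_fun measurableSet_Ioi
    intro q hq
    have hq0 : (0:ℝ) < q := hq
    simp only []
    rw [Real.rpow_add_one (ne_of_gt hq0)]
    push_cast
    ring
  -- identify LHS with J3
  have hLHS : (∫ q in Set.Ioi (0:ℝ),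
      Complex.exp (-(Complex.I * ζ * (q:ℂ))) * ((q ^ γ : ℝ) : ℂ) * ((q:ℂ) * f' q)) = J3 := by
    rw [hJ3_def]
    apply setIntegral_congr_fun measurableSet_Ioi
    intro q hq
    have hq0 : (0:ℝ) < q := hq
    simp only []
    rw [Real.rpow_add_one (ne_of_gt hq0)]
    push_cast
    ring
  rw [hLHS, hDval]
  have hL : Ltrans γ f ζ = J1 := rfl
  rw [hL]
  linear_combination hibp
end

section
/- Let m > 0, ε ∈ (−m, m) with ε ≠ 0 chosen so that η = −γ − λε/√(m²−ε²) and η̃ = −γ + λε/√(m²−ε²) are both nonzero, where λ > 0, χ² > λ², γ = √(χ²−λ²), and let A', B' be as in the relativistic Hydrogen-like problem. Define A = (A'+B')/(−2η) and B = (A'−B')/(−2η̃). Then A² = A, AB = A, B² = B, and BA = B. -/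
set_option maxHeartbeats 2000000

lemma helper {n : ℕ} (a b : ℂ) (hb : b ≠ 0) (X Y Z : Matrix (Fin n) (Fin n) ℂ)
    (h : X * Y = b • Z) : (a⁻¹ • X) * (b⁻¹ • Y) = a⁻¹ • Z := by
  rw [smul_mul_smul_comm, h, smul_smul, mul_assoc, inv_mul_cancel₀ hb, mul_one]

lemma core (g q c l m e : ℂ) (hg2 : g^2 = c^2 - l^2) (hq2 : q^2 = m^2 - e^2) (hq0 : q ≠ 0) :
    (!![g - c, l; -l, g + c] + !![l*((m+e)/q), -(c+g)*((m+e)/q); -(g-c)*((m-e)/q), -l*((m-e)/q)]) *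
      (!![g - c, l; -l, g + c] + !![l*((m+e)/q), -(c+g)*((m+e)/q); -(g-c)*((m-e)/q), -l*((m-e)/q)]) =
      (2*g + 2*l*e/q) • (!![g - c, l; -l, g + c] + !![l*((m+e)/q), -(c+g)*((m+e)/q); -(g-c)*((m-e)/q), -l*((m-e)/q)]) ∧
    (!![g - c, l; -l, g + c] + !![l*((m+e)/q), -(c+g)*((m+e)/q); -(g-c)*((m-e)/q), -l*((m-e)/q)]) *
      (!![g - c, l; -l, g + c] - !![l*((m+e)/q), -(c+g)*((m+e)/q); -(g-c)*((m-e)/q), -l*((m-e)/q)]) =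
      (2*g - 2*l*e/q) • (!![g - c, l; -l, g + c] + !![l*((m+e)/q), -(c+g)*((m+e)/q); -(g-c)*((m-e)/q), -l*((m-e)/q)]) ∧
    (!![g - c, l; -l, g + c] - !![l*((m+e)/q), -(c+g)*((m+e)/q); -(g-c)*((m-e)/q), -l*((m-e)/q)]) *
      (!![g - c, l; -l, g + c] - !![l*((m+e)/q), -(c+g)*((m+e)/q); -(g-c)*((m-e)/q), -l*((m-e)/q)]) =
      (2*g - 2*l*e/q) • (!![g - c, l; -l, g + c] - !![l*((m+e)/q), -(c+g)*((m+e)/q); -(g-c)*((m-e)/q), -l*((m-e)/q)]) ∧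
    (!![g - c, l; -l, g + c] - !![l*((m+e)/q), -(c+g)*((m+e)/q); -(g-c)*((m-e)/q), -l*((m-e)/q)]) *
      (!![g - c, l; -l, g + c] + !![l*((m+e)/q), -(c+g)*((m+e)/q); -(g-c)*((m-e)/q), -l*((m-e)/q)]) =
      (2*g + 2*l*e/q) • (!![g - c, l; -l, g + c] - !![l*((m+e)/q), -(c+g)*((m+e)/q); -(g-c)*((m-e)/q), -l*((m-e)/q)]) := by
  refine ⟨?_, ?_, ?_, ?_⟩ <;>
  (ext i j
   fin_cases i <;> fin_cases j <;>
     simp [Matrix.mul_apply, Fin.sum_univ_two] <;>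
     field_simp)
  all_goals first
    | ring1
    | linear_combination (m^2 - e^2 - q^2) * hg2
    | linear_combination (e^2 - m^2 - q^2) * hg2
    | linear_combination (2*q*m + 2*q*e) * hg2
    | linear_combination (2*q*m - 2*q*e) * hg2
    | linear_combination (-2*q*m - 2*q*e) * hg2
    | linear_combination (-2*q*m + 2*q*e) * hg2

/-- with `η = -γ - λε/√(m²-ε²)` and `η̃ = -γ + λε/√(m²-ε²)` both nonzero,
the matrices `A = (A'+B')/(-2η)` and `B = (A'-B')/(-2η̃)` satisfy
`A² = A`, `AB = A`, `B² = B`, `BA = B`. -/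
theorem matrix_relations_A_B_idempotent
    (m ε lam chi : ℝ) (hm : 0 < m) (hε1 : -m < ε) (hε2 : ε < m) (hε0 : ε ≠ 0)
    (hlam : 0 < lam) (hchi : lam ^ 2 < chi ^ 2)
    (hη : -Real.sqrt (chi ^ 2 - lam ^ 2) - lam * ε / Real.sqrt (m ^ 2 - ε ^ 2) ≠ 0)
    (hη' : -Real.sqrt (chi ^ 2 - lam ^ 2) + lam * ε / Real.sqrt (m ^ 2 - ε ^ 2) ≠ 0) :
    let γ : ℝ := Real.sqrt (chi ^ 2 - lam ^ 2)
    let η : ℝ := -γ - lam * ε / Real.sqrt (m ^ 2 - ε ^ 2)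
    let η' : ℝ := -γ + lam * ε / Real.sqrt (m ^ 2 - ε ^ 2)
    let s : ℝ := Real.sqrt ((m + ε) / (m - ε))
    let s' : ℝ := Real.sqrt ((m - ε) / (m + ε))
    let A' : Matrix (Fin 2) (Fin 2) ℂ :=
      !![((γ - chi : ℝ) : ℂ), ((lam : ℝ) : ℂ); ((-lam : ℝ) : ℂ), ((γ + chi : ℝ) : ℂ)]
    let B' : Matrix (Fin 2) (Fin 2) ℂ :=
      !![((lam * s : ℝ) : ℂ), ((-(chi + γ) * s : ℝ) : ℂ);
         ((-(γ - chi) * s' : ℝ) : ℂ), ((-lam * s' : ℝ) : ℂ)]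
    let A : Matrix (Fin 2) (Fin 2) ℂ := (((-2 * η : ℝ) : ℂ))⁻¹ • (A' + B')
    let B : Matrix (Fin 2) (Fin 2) ℂ := (((-2 * η' : ℝ) : ℂ))⁻¹ • (A' - B')
    A * A = A ∧ A * B = A ∧ B * B = B ∧ B * A = B := by
  intro γ η η' s s' A' B' A B
  have hme : (0:ℝ) < m - ε := by linarith
  have hpe : (0:ℝ) < m + ε := by linarith
  have hm2 : (0:ℝ) < m^2 - ε^2 := by nlinarith
  set q := Real.sqrt (m ^ 2 - ε ^ 2) with hqdef
  have hq : 0 < q := Real.sqrt_pos.mpr hm2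
  have hq2 : q^2 = m^2 - ε^2 := Real.sq_sqrt hm2.le
  have hγ2 : γ^2 = chi^2 - lam^2 := Real.sq_sqrt (by linarith)
  have hs : s = (m+ε)/q := by
    have h1 : s * q = m + ε := by
      rw [show s = Real.sqrt ((m+ε)/(m-ε)) from rfl, hqdef,
        ← Real.sqrt_mul (by positivity),
        show (m+ε)/(m-ε) * (m^2-ε^2) = (m+ε)^2 by field_simp; ring]
      exact Real.sqrt_sq hpe.le
    rw [eq_div_iff hq.ne']; exact h1
  have hs' : s' = (m-ε)/q := by
    have h1 : s' * q = m - ε := by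
      rw [show s' = Real.sqrt ((m-ε)/(m+ε)) from rfl, hqdef,
        ← Real.sqrt_mul (by positivity),
        show (m-ε)/(m+ε) * (m^2-ε^2) = (m-ε)^2 by field_simp; ring]
      exact Real.sqrt_sq hme.le
    rw [eq_div_iff hq.ne']; exact h1
  have hg2c : (γ:ℂ)^2 = (chi:ℂ)^2 - (lam:ℂ)^2 := by exact_mod_cast hγ2
  have hq2c : (q:ℂ)^2 = (m:ℂ)^2 - (ε:ℂ)^2 := by exact_mod_cast hq2
  have hq0c : (q:ℂ) ≠ 0 := by exact_mod_cast hq.ne'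
  obtain ⟨k1, k2, k3, k4⟩ := core (γ:ℂ) (q:ℂ) (chi:ℂ) (lam:ℂ) (m:ℂ) (ε:ℂ) hg2c hq2c hq0c
  have eA : A' = !![(γ:ℂ) - chi, (lam:ℂ); -(lam:ℂ), (γ:ℂ) + chi] := by
    rw [show A' = !![((γ - chi : ℝ) : ℂ), ((lam : ℝ) : ℂ); ((-lam : ℝ) : ℂ), ((γ + chi : ℝ) : ℂ)] from rfl]
    push_cast; rfl
  have eB : B' = !![(lam:ℂ)*(((m:ℂ)+ε)/q), -((chi:ℂ)+γ)*(((m:ℂ)+ε)/q);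
      -((γ:ℂ)-chi)*(((m:ℂ)-ε)/q), -(lam:ℂ)*(((m:ℂ)-ε)/q)] := by
    rw [show B' = !![((lam * s : ℝ) : ℂ), ((-(chi + γ) * s : ℝ) : ℂ);
         ((-(γ - chi) * s' : ℝ) : ℂ), ((-lam * s' : ℝ) : ℂ)] from rfl, hs, hs']
    push_cast; rfl
  have hηne : η ≠ 0 := hη
  have hη'ne : η' ≠ 0 := hη'
  have ec : ((-2 * η : ℝ) : ℂ) = 2*(γ:ℂ) + 2*(lam:ℂ)*(ε:ℂ)/(q:ℂ) := by
    rw [show η = -γ - lam * ε / q from rfl]; push_cast; ring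
  have ec' : ((-2 * η' : ℝ) : ℂ) = 2*(γ:ℂ) - 2*(lam:ℂ)*(ε:ℂ)/(q:ℂ) := by
    rw [show η' = -γ + lam * ε / q from rfl]; push_cast; ring
  have hcne : ((-2 * η : ℝ) : ℂ) ≠ 0 := by
    exact_mod_cast mul_ne_zero (by norm_num : (-2:ℝ) ≠ 0) hηne
  have hdne : ((-2 * η' : ℝ) : ℂ) ≠ 0 := by
    exact_mod_cast mul_ne_zero (by norm_num : (-2:ℝ) ≠ 0) hη'ne
  have hCne : (2*(γ:ℂ) + 2*(lam:ℂ)*(ε:ℂ)/(q:ℂ)) ≠ 0 := ec ▸ hcne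
  have hDne : (2*(γ:ℂ) - 2*(lam:ℂ)*(ε:ℂ)/(q:ℂ)) ≠ 0 := ec' ▸ hdne
  refine ⟨?_, ?_, ?_, ?_⟩
  · show (((-2 * η : ℝ) : ℂ))⁻¹ • (A' + B') * ((((-2 * η : ℝ) : ℂ))⁻¹ • (A' + B'))
      = (((-2 * η : ℝ) : ℂ))⁻¹ • (A' + B')
    rw [eA, eB, ec]
    exact helper _ _ hCne _ _ _ k1
  · show (((-2 * η : ℝ) : ℂ))⁻¹ • (A' + B') * ((((-2 * η' : ℝ) : ℂ))⁻¹ • (A' - B'))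
      = (((-2 * η : ℝ) : ℂ))⁻¹ • (A' + B')
    rw [eA, eB, ec, ec']
    exact helper _ _ hDne _ _ _ k2
  · show (((-2 * η' : ℝ) : ℂ))⁻¹ • (A' - B') * ((((-2 * η' : ℝ) : ℂ))⁻¹ • (A' - B'))
      = (((-2 * η' : ℝ) : ℂ))⁻¹ • (A' - B')
    rw [eA, eB, ec']
    exact helper _ _ hDne _ _ _ k3
  · show (((-2 * η' : ℝ) : ℂ))⁻¹ • (A' - B') * ((((-2 * η : ℝ) : ℂ))⁻¹ • (A' + B'))
      = (((-2 * η' : ℝ) : ℂ))⁻¹ • (A' - B')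
    rw [eA, eB, ec', ec]
    exact helper _ _ hCne _ _ _ k4
end

section
/- Let s ∈ ℝ and suppose there exists a function h analytic on the whole open lower half-plane {ζ ∈ ℂ : Im ζ < 0} such that h(ζ) = (ζ + i/2)^s (principal branch of the complex power) for all ζ with Im ζ < 0 and Re(ζ + i/2) > 0. Then s is a nonnegative integer. -/
open Complex Filter Topology

lemma key_lim (s : ℝ) (h : ℂ → ℂ)
    (han : DifferentiableOn ℂ h {ζ : ℂ | ζ.im < 0})
    (heq : ∀ ζ : ℂ, ζ.im < 0 → 0 < (ζ + Complex.I / 2).re →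
      h ζ = (ζ + Complex.I / 2) ^ (s : ℂ)) :
    Tendsto (fun t : ℝ => (t : ℂ) ^ (s : ℂ)) (𝓝[>] (0:ℝ)) (𝓝 (h (-(Complex.I/2)))) := by
  have hopen : IsOpen {ζ : ℂ | ζ.im < 0} := isOpen_lt Complex.continuous_im continuous_const
  have hmem : (-(Complex.I/2)) ∈ {ζ : ℂ | ζ.im < 0} := by
    simp [Complex.div_im]
  have hct : ContinuousAt h (-(Complex.I/2)) :=
    (han.differentiableAt (hopen.mem_nhds hmem)).continuousAt
  have h1 : Tendsto (fun t : ℝ => (-(Complex.I/2) + (t:ℂ))) (𝓝[>] (0:ℝ)) (𝓝 (-(Complex.I/2))) := by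
    have hc : Continuous (fun t : ℝ => (-(Complex.I/2) + (t:ℂ))) := by continuity
    have := hc.tendsto (0:ℝ)
    simp only [Complex.ofReal_zero, add_zero] at this
    exact this.mono_left nhdsWithin_le_nhds
  have h2 : Tendsto (fun t : ℝ => h (-(Complex.I/2) + (t:ℂ))) (𝓝[>] (0:ℝ)) (𝓝 (h (-(Complex.I/2)))) :=
    hct.tendsto.comp h1
  refine h2.congr' ?_
  filter_upwards [self_mem_nhdsWithin] with t (ht : 0 < t)
  have him : (-(Complex.I/2) + (t:ℂ)).im < 0 := by
    simp [Complex.div_im]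
  have hre : 0 < ((-(Complex.I/2) + (t:ℂ)) + Complex.I/2).re := by
    simpa using ht
  rw [heq _ him hre]
  norm_num

lemma s_nonneg (s : ℝ) (h : ℂ → ℂ)
    (han : DifferentiableOn ℂ h {ζ : ℂ | ζ.im < 0})
    (heq : ∀ ζ : ℂ, ζ.im < 0 → 0 < (ζ + Complex.I / 2).re →
      h ζ = (ζ + Complex.I / 2) ^ (s : ℂ)) : 0 ≤ s := by
  by_contra hs
  push_neg at hs
  have hlim := (key_lim s h han heq)
  have hnorm : Tendsto (fun t : ℝ => ‖(t:ℂ) ^ (s:ℂ)‖) (𝓝[>] (0:ℝ)) (𝓝 ‖h (-(Complex.I/2))‖) :=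
    hlim.norm
  have htop : Tendsto (fun t : ℝ => ‖(t:ℂ) ^ (s:ℂ)‖) (𝓝[>] (0:ℝ)) atTop := by
    have h1 : Tendsto (fun t : ℝ => (t⁻¹) ^ (-s)) (𝓝[>] (0:ℝ)) atTop :=
      (tendsto_rpow_atTop (by linarith : (0:ℝ) < -s)).comp tendsto_inv_nhdsGT_zero
    refine h1.congr' ?_
    filter_upwards [self_mem_nhdsWithin] with t (ht : 0 < t)
    rw [Complex.norm_cpow_eq_rpow_re_of_pos ht, Complex.ofReal_re,
      Real.inv_rpow ht.le, ← Real.rpow_neg ht.le, neg_neg]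
  exact not_tendsto_nhds_of_tendsto_atTop htop _ hnorm


lemma aux_induct : ∀ n : ℕ, ∀ s : ℝ, ∀ h : ℂ → ℂ,
    DifferentiableOn ℂ h {ζ : ℂ | ζ.im < 0} →
    (∀ ζ : ℂ, ζ.im < 0 → 0 < (ζ + Complex.I / 2).re →
      h ζ = (ζ + Complex.I / 2) ^ (s : ℂ)) →
    s ≤ n → ∃ m : ℕ, s = m := by
  intro n
  induction n with
  | zero =>
    intro s h han heq hle
    exact ⟨0, le_antisymm (by exact_mod_cast hle) (s_nonneg s h han heq) |>.symm ▸ by norm_num⟩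
  | succ n ih =>
    intro s h han heq hle
    by_cases hc : s ≤ n
    · exact ih s h han heq hc
    push_neg at hc
    have hspos : 0 < s := lt_of_le_of_lt (Nat.cast_nonneg n) hc
    have hopen : IsOpen {ζ : ℂ | ζ.im < 0} := isOpen_lt Complex.continuous_im continuous_const
    have hmem : (-(Complex.I/2)) ∈ {ζ : ℂ | ζ.im < 0} := by simp [Complex.div_im]
    -- h vanishes at the singular point
    have hz : h (-(Complex.I/2)) = 0 := by
      have h0 : Tendsto (fun t : ℝ => (t : ℂ) ^ (s : ℂ)) (𝓝[>] (0:ℝ)) (𝓝 0) := by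
        rw [tendsto_zero_iff_norm_tendsto_zero]
        have hr : Tendsto (fun t : ℝ => t ^ s) (𝓝[>] (0:ℝ)) (𝓝 0) := by
          have := (Real.continuousAt_rpow_const 0 s (Or.inr hspos.le)).tendsto
          rw [Real.zero_rpow hspos.ne'] at this
          exact this.mono_left nhdsWithin_le_nhds
        refine hr.congr' ?_
        filter_upwards [self_mem_nhdsWithin] with t (ht : 0 < t)
        rw [Complex.norm_cpow_eq_rpow_re_of_pos ht, Complex.ofReal_re]
      exact tendsto_nhds_unique (key_lim s h han heq) h0
    -- divide out the zero
    set g : ℂ → ℂ := dslope h (-(Complex.I/2)) with hg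
    have hgdiff : DifferentiableOn ℂ g {ζ : ℂ | ζ.im < 0} :=
      (differentiableOn_dslope (hopen.mem_nhds hmem)).mpr han
    have hgeq : ∀ ζ : ℂ, ζ.im < 0 → 0 < (ζ + Complex.I / 2).re →
        g ζ = (ζ + Complex.I / 2) ^ ((s - 1 : ℝ) : ℂ) := by
      intro ζ him hre
      have hw0 : ζ + Complex.I/2 ≠ 0 := by
        intro h0
        rw [h0] at hre
        simp at hre
      have hne : ζ ≠ -(Complex.I/2) := by
        intro h0
        apply hw0
        rw [h0]; ring
      rw [hg, dslope_of_ne h hne, slope_def_field, heq ζ him hre, hz, sub_zero,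
        sub_neg_eq_add]
      have : ((s - 1 : ℝ) : ℂ) = (s : ℂ) - 1 := by push_cast; ring
      rw [this, Complex.cpow_sub _ _ hw0, Complex.cpow_one]
    obtain ⟨m, hm⟩ := ih (s - 1) g hgdiff hgeq (by push_cast at hle ⊢; linarith)
    exact ⟨m + 1, by push_cast; linarith⟩

/-- if the principal-branch power `(ζ + i/2)^s` (for real `s`) extends to a
function analytic on the whole open lower half-plane — which contains the singular point
`-i/2` — then `s` must be a nonnegative integer. -/
theorem analyticity_quantizes_exponent
    (s : ℝ) (h : ℂ → ℂ)
    (han : DifferentiableOn ℂ h {ζ : ℂ | ζ.im < 0})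
    (heq : ∀ ζ : ℂ, ζ.im < 0 → 0 < (ζ + Complex.I / 2).re →
      h ζ = (ζ + Complex.I / 2) ^ (s : ℂ)) :
    ∃ n : ℕ, s = n := by
  exact aux_induct ⌈s⌉₊ s h han heq (Nat.le_ceil s)
end
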